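/- arXiv:2112.09171 — 4 statements merged into one kernel-verified Lean document; each statement's English description precedes it below -/
import Mathlib

section
/- For every SEM M and interventions I, J in the allowed set I such that the composition I;J is also allowed, and for every context u, the outcomes of the intervened SEM M_I under intervention J equal the outcomes of M under the composed intervention I;J: M_I(u, J) = M(u, I;J). -/
namespace Causal

/-- An outcome assigns a value to every endogenous variable. -/
abbrev Outcome (V : Type) (R : V → Type) := ∀ v, R v

/-- An intervention is a partial assignment of values to endogenous variables. -/
abbrev Intv (V : Type) (R : V → Type) := ∀ v, Option (R v)

/-- The set of variables targeted by an intervention. -/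
def dom {V : Type} {R : V → Type} (I : Intv V R) : Set V := {v | I v ≠ none}

/-- An outcome agrees with an intervention on its domain. -/
def consistent {V : Type} {R : V → Type} (I : Intv V R) (o : Outcome V R) : Prop :=
  ∀ v a, I v = some a → o v = a

/-- Composition of interventions: the second intervention overrides the first. -/
def comp {V : Type} {R : V → Type} (I J : Intv V R) : Intv V R :=
  fun v => (J v).orElse (fun _ => I v)

/-- A causal model maps contexts and interventions to sets of outcomes. -/
abbrev CModel (Ctx V : Type) (R : V → Type) := Ctx → Intv V R → Set (Outcome V R)

/-- A structural-equations model: each endogenous variable `X` has a structural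
equation determining its value from the context and the values of the other variables. -/
structure SEM (Ctx V : Type) (R : V → Type) where
  F : ∀ X : V, Ctx → (∀ Y, Y ≠ X → R Y) → R X

/-- Outcomes of a SEM under a context and intervention: solutions of the structural
equations, where intervened variables instead take their prescribed values. -/
def SEM.outcomes {Ctx V : Type} {R : V → Type} (M : SEM Ctx V R) (u : Ctx)
    (I : Intv V R) : Set (Outcome V R) :=
  {o | ∀ X, match I X with
    | some a => o X = a
    | none => o X = M.F X u (fun Y _ => o Y)}

/-- The SEM obtained from `M` by replacing the equation of each intervened
variable with the constant equation prescribed by `I`. -/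
def SEM.intervene {Ctx V : Type} {R : V → Type} (M : SEM Ctx V R) (I : Intv V R) :
    SEM Ctx V R where
  F X u w := match I X with
    | some a => a
    | none => M.F X u w

/-- Equation modification agrees with intervention composition: for a SEM `M`
and allowed interventions `I, J` with `I;J` allowed, `M_I(u, J) = M(u, I;J)`. -/
theorem stmt2 {Ctx V : Type} {R : V → Type} [Fintype V] [∀ v, Fintype (R v)]
    (M : SEM Ctx V R) (𝓘 : Set (Intv V R)) (I J : Intv V R)
    (hI : I ∈ 𝓘) (hJ : J ∈ 𝓘) (hIJ : comp I J ∈ 𝓘) (u : Ctx) :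
    (M.intervene I).outcomes u J = M.outcomes u (comp I J) := by
  ext o
  constructor <;> intro h X <;> have hX := h X <;>
    simp only [SEM.outcomes, SEM.intervene, comp, Set.mem_setOf_eq] at * <;>
    cases hJX : J X <;> cases hIX : I X <;>
      simp_all [Option.orElse]

end Causal
end

section
/- For every GSEM, there is an equivalent causal constraints model (CCM), and for every CCM, there is an equivalent GSEM. That is, the classes of GSEMs and CCMs have the same expressive power: for each model of one kind there is a model of the other kind with the same signature and identical outcome sets for all contexts and allowed interventions. -/
namespace Causal

/-- A causal constraint: a `{0,1}`-valued function of contexts and outcomes,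
together with an activation set of intervention targets. -/
abbrev Constraint (Ctx V : Type) (R : V → Type) :=
  (Ctx → Outcome V R → Bool) × Set (Set V)

/-- Outcomes of a CCM: all assignments agreeing with the intervention and
satisfying every constraint activated by the intervention's target. -/
def ccmOutcomes {Ctx V : Type} {R : V → Type} (C : Set (Constraint Ctx V R))
    (u : Ctx) (I : Intv V R) : Set (Outcome V R) :=
  {o | consistent I o ∧ ∀ c ∈ C, dom I ∈ c.2 → c.1 u o = true}

/-- GSEMs and CCMs are equally expressive: for every GSEM there is a CCM with
the same signature and identical outcome sets for all contexts and allowed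
interventions, and vice versa. -/
theorem stmt4 {Ctx V : Type} {R : V → Type} (𝓘 : Set (Intv V R)) :
    (∀ F : CModel Ctx V R,
      (∀ (u : Ctx), ∀ I ∈ 𝓘, ∀ o ∈ F u I, consistent I o) →
      ∃ C : Set (Constraint Ctx V R),
        ∀ (u : Ctx), ∀ I ∈ 𝓘, F u I = ccmOutcomes C u I) ∧
    (∀ C : Set (Constraint Ctx V R),
      ∃ F : CModel Ctx V R,
        (∀ (u : Ctx), ∀ I ∈ 𝓘, ∀ o ∈ F u I, consistent I o) ∧
        ∀ (u : Ctx), ∀ I ∈ 𝓘, ccmOutcomes C u I = F u I) := by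
  classical
  constructor
  · intro F hF
    refine ⟨{c | ∃ I ∈ 𝓘, c = (fun u o => if o ∈ F u I ∨ ¬ consistent I o then true else false, {dom I})}, ?_⟩
    intro u J hJ
    ext o
    constructor
    · intro ho
      refine ⟨hF u J hJ o ho, ?_⟩
      rintro c ⟨I, hI, rfl⟩ hdom
      simp only at hdom ⊢
      rw [if_pos]
      by_cases hc : consistent I o
      · left
        have hIJ : I = J := by
          funext v
          by_cases hv : v ∈ dom I
          · obtain ⟨a, ha⟩ : ∃ a, I v = some a := by
              cases h : I v with
              | none => exact absurd h hv
              | some a => exact ⟨a, rfl⟩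
            have hvJ : v ∈ dom J := hdom ▸ hv
            obtain ⟨b, hb⟩ : ∃ b, J v = some b := by
              cases h : J v with
              | none => exact absurd h hvJ
              | some b => exact ⟨b, rfl⟩
            rw [ha, hb, show a = o v from (hc v a ha).symm,
              show b = o v from (hF u J hJ o ho v b hb).symm]
          · have hvJ : v ∉ dom J := hdom ▸ hv
            simp only [dom, Set.mem_setOf_eq, not_not] at hv hvJ
            rw [hv, hvJ]
        rw [hIJ]; exact ho
      · right; exact hc
    · rintro ⟨hcons, hall⟩
      have := hall (fun u o => if o ∈ F u J ∨ ¬ consistent J o then true else false, {dom J})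
        ⟨J, hJ, rfl⟩ rfl
      simp only at this
      by_cases h : o ∈ F u J ∨ ¬ consistent J o
      · rcases h with h | h
        · exact h
        · exact absurd hcons h
      · rw [if_neg h] at this; exact absurd this (by simp)
  · intro C
    refine ⟨fun u I => ccmOutcomes C u I, ?_, ?_⟩
    · intro u I _ o ho; exact ho.1
    · intro u I _; rfl
end Causal
end

section
/- The construction mapping a GSEM M to the CCM M' containing, for each allowed intervention X←x, a constraint C_{X←x} with activation set a_C = {X} and f_C(u, v) = 1 iff (v[X] ≠ x or v ∈ F(u, X←x)), yields a CCM whose outcomes M'(u, X←x) coincide exactly with F(u, X←x) for every context u and allowed intervention X←x. -/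
namespace Causal

open scoped Classical in
/-- The CCM associated to a GSEM: for each allowed intervention `I` a constraint
with activation set `{dom I}` which holds of `(u, o)` iff `o` disagrees with `I`
or `o` is an outcome of the GSEM under `I`. -/
noncomputable def gsemToCCM {Ctx V : Type} {R : V → Type}
    (F : CModel Ctx V R) (𝓘 : Set (Intv V R)) : Set (Constraint Ctx V R) :=
  {c | ∃ I ∈ 𝓘, c = (fun u o => if ¬ consistent I o ∨ o ∈ F u I then true else false,
      {dom I})}

/-- The GSEM-to-CCM construction is outcome-preserving: for every context and
allowed intervention, the outcomes of the constructed CCM are exactly the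
outcomes of the GSEM. -/
theorem stmt5 {Ctx V : Type} {R : V → Type} (F : CModel Ctx V R)
    (𝓘 : Set (Intv V R))
    (heff : ∀ (u : Ctx), ∀ I ∈ 𝓘, ∀ o ∈ F u I, consistent I o) :
    ∀ (u : Ctx), ∀ I ∈ 𝓘, ccmOutcomes (gsemToCCM F 𝓘) u I = F u I := by
  intro u I hI
  ext o
  constructor
  · rintro ⟨hcons, hc⟩
    classical
    have := hc (fun u o => if ¬ consistent I o ∨ o ∈ F u I then true else false, {dom I})
      ⟨I, hI, rfl⟩ rfl
    simp only at this
    by_contra ho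
    have h2 : ¬ (¬ consistent I o ∨ o ∈ F u I) := by
      push_neg; exact ⟨hcons, ho⟩
    rw [if_neg h2] at this
    exact Bool.false_ne_true this
  · intro ho
    have hcons := heff u I hI o ho
    refine ⟨hcons, ?_⟩
    rintro c ⟨J, hJ, rfl⟩ hdom
    simp only [Set.mem_singleton_iff] at hdom
    by_cases hJo : consistent J o
    · have hIJ : I = J := by
        funext v
        cases hIv : I v with
        | none =>
          have : v ∉ dom J := by rw [← hdom]; simp [dom, hIv]
          simp only [dom, Set.mem_setOf_eq, not_not] at this
          exact this.symm
        | some a =>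
          have hvJ : v ∈ dom J := by rw [← hdom]; simp [dom, hIv]
          simp only [dom, Set.mem_setOf_eq] at hvJ
          cases hJv : J v with
          | none => exact absurd hJv hvJ
          | some b =>
            have h1 := hcons v a hIv
            have h2 := hJo v b hJv
            exact congrArg some (h1.symm.trans h2)
      subst hIJ
      simp [ho]
    · simp [hJo]
end Causal
end

section
/- If a SEM M contains a cycle of dependencies among endogenous variables V_1, …, V_k (V_{i+1} is not independent of V_i for i = 1, …, k−1 and V_1 is not independent of V_k), then M falsifies an instance of the recursiveness axiom D6; consequently, every SEM in which all instances of D6 are valid is acyclic. -/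
/-!
A dependency of `X` on `Y` is witnessed by two assignments `w, w'` to the other variables
that differ only at `Y` and give different values of `F_X`. Pinning every variable except
`X` to `w` forces `X = F_X(w)`; additionally setting `Y` to `w'(Y)` forces `X = F_X(w')`.
So every dependency is an instance of `Y ⇝ X`, and a dependency cycle is a `⇝`-cycle,
which D6 forbids. Conversely, if D6 holds then `⇝` has no cycles in any context, so its
transitive closure is a strict partial order; a linear extension of it (Szpilrajn) is a
total order in which every equation ignores the later variables, since a dependency of `X`
on a later `Y` would give `Y ⇝ X`.
-/

namespace Causal

/-- Extend an intervention by additionally setting variable `X` to `a`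
(overriding any previous value for `X`). -/
def setVar {V : Type} {R : V → Type} [DecidableEq V] (I : Intv V R) (X : V) (a : R X) :
    Intv V R :=
  fun v => if h : v = X then some (cast (show R X = R v by rw [h]) a) else I v

/-- `Indep M u X Y`: the structural equation for `X` does not depend on `Y`
in context `u`. -/
def Indep {Ctx V : Type} {R : V → Type} (M : SEM Ctx V R) (u : Ctx) (X Y : V) : Prop :=
  ∀ (w w' : ∀ Z, Z ≠ X → R Z), (∀ Z hZ, Z ≠ Y → w Z hZ = w' Z hZ) →
    M.F X u w = M.F X u w'

/-- A SEM is acyclic (recursive) if for each context there is a strict total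
order on the endogenous variables such that each equation is independent of
all variables above it in the order. -/
def SEM.Acyclic {Ctx V : Type} {R : V → Type} (M : SEM Ctx V R) : Prop :=
  ∀ u : Ctx, ∃ r : V → V → Prop, IsStrictTotalOrder V r ∧
    ∀ X Y : V, r X Y → Indep M u X Y

/-- `Affects M u Y Z` (`Y ⇝ Z`): there is an intervention `I` and a value `y`
for `Y` such that additionally setting `Y ← y` changes the value of `Z`:
`[I](Z = z)` and `[I; Y ← y](Z = z')` for some `z ≠ z'`. -/
def Affects {Ctx V : Type} {R : V → Type} [DecidableEq V]
    (M : CModel Ctx V R) (u : Ctx) (Y Z : V) : Prop :=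
  ∃ (I : Intv V R) (y : R Y) (z z' : R Z), z ≠ z' ∧
    (∀ o ∈ M u I, o Z = z) ∧ (∀ o ∈ M u (setVar I Y y), o Z = z')

/-- Semantic validity of the recursiveness axiom D6: there are no
`⇝`-cycles. -/
def D6holds {Ctx V : Type} {R : V → Type} [DecidableEq V] (M : CModel Ctx V R) : Prop :=
  ∀ (u : Ctx) (k : ℕ) (X : Fin (k + 1) → V),
    (∀ i : Fin k, Affects M u (X i.castSucc) (X i.succ)) →
    ¬ Affects M u (X (Fin.last k)) (X 0)

open Relation

section Outcomes

variable {Ctx V : Type} {R : V → Type} {M : SEM Ctx V R} {u : Ctx} {I : Intv V R}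
  {o : Outcome V R} {X : V}

theorem SEM.apply_eq_of_mem_outcomes_of_eq_some (ho : o ∈ M.outcomes u I) {a : R X}
    (h : I X = some a) : o X = a := by
  simpa [h] using ho X

theorem SEM.apply_eq_F_of_mem_outcomes_of_eq_none (ho : o ∈ M.outcomes u I)
    (h : I X = none) : o X = M.F X u (fun Y _ => o Y) := by
  simpa [h] using ho X

theorem setVar_self [DecidableEq V] (I : Intv V R) (X : V) (a : R X) :
    setVar I X a X = some a := by
  simp [setVar]

theorem setVar_of_ne [DecidableEq V] (I : Intv V R) {X Y : V} (a : R X) (h : Y ≠ X) :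
    setVar I X a Y = I Y := by
  simp [setVar, h]

theorem indep_self : Indep M u X X :=
  fun _ _ hw => congrArg (M.F X u) (funext fun Z => funext fun hZ => hw Z hZ hZ)

theorem affects_of_not_indep [DecidableEq V] {Y : V} (h : ¬ Indep M u X Y) :
    Affects (fun u I => M.outcomes u I) u Y X := by
  have hYX : Y ≠ X := by
    rintro rfl
    exact h indep_self
  simp only [Indep, not_forall] at h
  obtain ⟨w, w', hww', hne⟩ := h
  let I : Intv V R := fun v => if hv : v = X then none else some (w v hv)
  refine ⟨I, w' Y hYX, _, _, hne, fun o ho => ?_, fun o ho => ?_⟩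
  · rw [SEM.apply_eq_F_of_mem_outcomes_of_eq_none ho (dif_pos rfl)]
    congr 1
    funext Z hZ
    exact SEM.apply_eq_of_mem_outcomes_of_eq_some ho (dif_neg hZ)
  · rw [SEM.apply_eq_F_of_mem_outcomes_of_eq_none ho
      (by rw [setVar_of_ne _ _ hYX.symm]; exact dif_pos rfl)]
    congr 1
    funext Z hZ
    by_cases hZY : Z = Y
    · subst hZY
      exact SEM.apply_eq_of_mem_outcomes_of_eq_some ho (setVar_self _ _ _)
    · rw [SEM.apply_eq_of_mem_outcomes_of_eq_some ho
        (by rw [setVar_of_ne _ _ hZY]; exact dif_neg hZ)]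
      exact hww' Z hZ hZY

end Outcomes

section Chains

variable {α : Type*} {E : α → α → Prop}

theorem exists_chain_of_reflTransGen {a b : α} (h : ReflTransGen E a b) :
    ∃ (k : ℕ) (X : Fin (k + 1) → α), X 0 = a ∧ X (Fin.last k) = b ∧
      ∀ i : Fin k, E (X i.castSucc) (X i.succ) := by
  induction h with
  | refl => exact ⟨0, fun _ => a, rfl, rfl, Fin.elim0⟩
  | @tail b c _ hbc ih =>
    obtain ⟨k, X, h0, hlast, hX⟩ := ih
    refine ⟨k + 1, Fin.snoc X c, by simpa using h0, by simp, Fin.lastCases ?_ fun i => ?_⟩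
    · simpa [hlast] using hbc
    · rw [Fin.succ_castSucc, Fin.snoc_castSucc, Fin.snoc_castSucc]
      exact hX i

theorem exists_isStrictTotalOrder_of_not_transGen_self (h : ∀ a, ¬ TransGen E a a) :
    ∃ r : α → α → Prop, IsStrictTotalOrder α r ∧ E ≤ r := by
  have : IsPartialOrder α (ReflTransGen E) :=
    { antisymm := fun a b hab hba => by
        rcases reflTransGen_iff_eq_or_transGen.mp hab with rfl | hab
        · rfl
        · exact (h a (hab.trans_left hba)).elim }
  obtain ⟨s, hs, hEs⟩ := extend_partialOrder (ReflTransGen E)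
  let : LinearOrder α :=
    { le := s, le_refl := refl_of s, le_trans := fun _ _ _ => trans_of s,
      le_antisymm := fun _ _ => antisymm_of s, le_total := total_of s,
      toDecidableLE := Classical.decRel _ }
  refine ⟨(· < ·), inferInstance, fun a b hab => lt_of_le_of_ne (hEs _ _ (.single hab)) ?_⟩
  rintro rfl
  exact h a (.single hab)

end Chains

theorem not_transGen_affects_self_of_d6holds {Ctx V : Type} {R : V → Type} [DecidableEq V]
    {M : CModel Ctx V R} (hM : D6holds M) (u : Ctx) (a : V) :
    ¬ TransGen (Affects M u) a a := by
  intro h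
  obtain ⟨b, hab, hba⟩ := TransGen.tail'_iff.mp h
  obtain ⟨k, X, h0, hlast, hX⟩ := exists_chain_of_reflTransGen hab
  exact hM u k X hX (h0 ▸ hlast ▸ hba)

theorem SEM.acyclic_of_d6holds {Ctx V : Type} {R : V → Type} [DecidableEq V]
    {M : SEM Ctx V R} (hM : D6holds (fun u I => M.outcomes u I)) : M.Acyclic := by
  intro u
  obtain ⟨r, hr, hAr⟩ :=
    exists_isStrictTotalOrder_of_not_transGen_self (not_transGen_affects_self_of_d6holds hM u)
  exact ⟨r, hr, fun X Y hXY => by_contra fun hdep =>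
    asymm_of r hXY (hAr _ _ (affects_of_not_indep hdep))⟩

theorem stmt12_general {Ctx V : Type} {R : V → Type} [DecidableEq V]
    (M : SEM Ctx V R) :
    (∀ (u : Ctx) (k : ℕ) (Vs : Fin (k + 1) → V),
      (∀ i : Fin k, ¬ Indep M u (Vs i.succ) (Vs i.castSucc)) →
      ¬ Indep M u (Vs 0) (Vs (Fin.last k)) →
      (∀ i : Fin k, Affects (fun u I => M.outcomes u I) u (Vs i.castSucc) (Vs i.succ)) ∧
        Affects (fun u I => M.outcomes u I) u (Vs (Fin.last k)) (Vs 0)) ∧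
    (D6holds (fun u I => M.outcomes u I) → M.Acyclic) :=
  ⟨fun _ _ _ hchain hlast =>
      ⟨fun i => affects_of_not_indep (hchain i), affects_of_not_indep hlast⟩,
    SEM.acyclic_of_d6holds⟩

/-- If a SEM contains a cycle of dependencies among endogenous variables
`V₀, …, V_k` then it falsifies an instance of the recursiveness axiom D6;
consequently, every SEM in which all instances of D6 are valid is acyclic. -/
theorem stmt12 {Ctx V : Type} {R : V → Type} [Fintype V] [DecidableEq V]
    [∀ v, Nonempty (R v)] (M : SEM Ctx V R) :
    (∀ (u : Ctx) (k : ℕ) (Vs : Fin (k + 1) → V),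
      (∀ i : Fin k, ¬ Indep M u (Vs i.succ) (Vs i.castSucc)) →
      ¬ Indep M u (Vs 0) (Vs (Fin.last k)) →
      (∀ i : Fin k, Affects (fun u I => M.outcomes u I) u (Vs i.castSucc) (Vs i.succ)) ∧
        Affects (fun u I => M.outcomes u I) u (Vs (Fin.last k)) (Vs 0)) ∧
    (D6holds (fun u I => M.outcomes u I) → M.Acyclic) :=
  stmt12_general M
end Causal
end
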